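/- arXiv:2104.07718 — 2 statements merged into one kernel-verified Lean document; each statement's English description precedes it below -/
import Mathlib

section
/- Let p ∈ (0,1), let A be a measurable event with probability 1 − p on a probability space, and let X be a random variable with cumulative distribution function F. Then the conditional distribution H_{X|A} of X given A satisfies H_{X|A} ≤_ss F^{[p,1]}, i.e., the conditional distribution of X given any event of probability 1 − p is smaller in strong stochastic order than the upper p-tail distribution of F. -/
open MeasureTheory Set Filter

noncomputable section

variable {Ω : Type*} [MeasurableSpace Ω]

/-- A cumulative distribution function on `ℝ`. -/
structure IsCDF (F : ℝ → ℝ) : Prop where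
  mono : Monotone F
  right_cont : ∀ x, ContinuousWithinAt F (Set.Ici x) x
  tendsto_atBot : Filter.Tendsto F Filter.atBot (nhds 0)
  tendsto_atTop : Filter.Tendsto F Filter.atTop (nhds 1)

/-- The probability space is atomless. -/
def Atomless (μ : Measure Ω) : Prop :=
  ∀ s : Set Ω, MeasurableSet s → 0 < μ s →
    ∃ t : Set Ω, MeasurableSet t ∧ t ⊆ s ∧ 0 < μ t ∧ μ t < μ s

/-- The distribution function of a random variable. -/
def distFun (μ : Measure Ω) (X : Ω → ℝ) : ℝ → ℝ :=
  fun x => (μ {ω | X ω ≤ x}).toReal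

/-- `X` is a random variable distributed according to `F`. -/
def HasCDF (μ : Measure Ω) (X : Ω → ℝ) (F : ℝ → ℝ) : Prop :=
  Measurable X ∧ ∀ x, distFun μ X x = F x

/-- Stochastic order `F ≤_st G`, i.e. `G(x) ≤ F(x)` for all `x`. -/
def StOrder (F G : ℝ → ℝ) : Prop := ∀ x, G x ≤ F x

/-- The ordered-coupling set `F^o_2(F,G)`: `X ~ F`, `Y ~ G`, `X ≤ Y` a.s. -/
def OrderedCoupling (μ : Measure Ω) (F G : ℝ → ℝ) (X Y : Ω → ℝ) : Prop :=
  HasCDF μ X F ∧ HasCDF μ Y G ∧ ∀ᵐ ω ∂μ, X ω ≤ Y ω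

/-- The directional lower (DL) coupling distribution function `D_*^{F,G}`. -/
def DLdf (F G : ℝ → ℝ) (x y : ℝ) : ℝ :=
  if y ≤ x then G y else F x - sInf ((fun z => F z - G z) '' Set.Icc x y)

/-- `(X,Y)` is DL-coupled: its joint distribution function is `D_*^{F,G}`. -/
def IsDLCoupled (μ : Measure Ω) (F G : ℝ → ℝ) (X Y : Ω → ℝ) : Prop :=
  ∀ x y : ℝ, (μ {ω | X ω ≤ x ∧ Y ω ≤ y}).toReal = DLdf F G x y

/-- The essential infimum of a distribution, `G^{-1}(0) = inf {t | G t > 0}`,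
as an extended real (possibly `⊥`). -/
def leftEnd (F : ℝ → ℝ) : EReal :=
  sInf ((fun t : ℝ => (t : EReal)) '' {t : ℝ | 0 < F t})

/-- Strong stochastic order `F ≤_ss G`:
`G(y) − G(x) ≥ F(y) − F(x)` for all `y ≥ x ≥ G^{-1}(0)`. -/
def SSOrder (F G : ℝ → ℝ) : Prop :=
  ∀ x y : ℝ, leftEnd G ≤ (x : EReal) → x ≤ y → F y - F x ≤ G y - G x

/-- The upper `p`-tail distribution `F^{[p,1]}(x) = (F(x) − p)_+ / (1 − p)`. -/
def upperTail (F : ℝ → ℝ) (p : ℝ) : ℝ → ℝ :=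
  fun x => max (F x - p) 0 / (1 - p)

/-- The conditional distribution function of `X` given the event `A`. -/
def condCDF' (μ : Measure Ω) (X : Ω → ℝ) (A : Set Ω) : ℝ → ℝ :=
  fun x => (μ (A ∩ {ω | X ω ≤ x}) / μ A).toReal

/-!
Right-continuity of `F` gives `F ≥ p` from the left end of `F^{[p,1]}` on, and there the
increments of `F^{[p,1]}` are those of `F` divided by `1 - p`. The increments of `H_{X|A}` are
`P(A, x < X ≤ y) / (1 - p) ≤ P(x < X ≤ y) / (1 - p)`.
-/

open ProbabilityTheory

lemma distFun_eq_cdf_map (μ : Measure Ω) [IsProbabilityMeasure μ] {X : Ω → ℝ}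
    (hX : Measurable X) : distFun μ X = cdf (μ.map X) := by
  ext x
  have := Measure.isProbabilityMeasure_map (μ := μ) hX.aemeasurable
  rw [cdf_eq_real, map_measureReal_apply hX measurableSet_Iic]
  rfl

lemma measureReal_inter_sub_le {α : Type*} [MeasurableSpace α] (μ : Measure α)
    [IsFiniteMeasure μ] (B : Set α) {s t : Set α} (hst : s ⊆ t) (hs : MeasurableSet s) :
    μ.real (B ∩ t) - μ.real (B ∩ s) ≤ μ.real t - μ.real s := by
  have hBt := measureReal_inter_add_sdiff (μ := μ) (s := B ∩ t) hs
  have ht := measureReal_inter_add_sdiff (μ := μ) (s := t) hs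
  rw [inter_assoc, inter_eq_right.2 hst] at hBt
  rw [inter_eq_right.2 hst] at ht
  have hdiff : μ.real ((B ∩ t) \ s) ≤ μ.real (t \ s) :=
    measureReal_mono (sdiff_subset_sdiff_left inter_subset_right)
  linarith

lemma condCDF'_sub_le (μ : Measure Ω) [IsFiniteMeasure μ] {X : Ω → ℝ} (hX : Measurable X)
    (A : Set Ω) {x y : ℝ} (hxy : x ≤ y) :
    condCDF' μ X A y - condCDF' μ X A x ≤ (distFun μ X y - distFun μ X x) / μ.real A := by
  simp only [condCDF', distFun, ENNReal.toReal_div, ← measureReal_def, div_sub_div_same]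
  exact div_le_div_of_nonneg_right (measureReal_inter_sub_le μ A
    (fun ω (h : X ω ≤ x) => h.trans hxy) (hX measurableSet_Iic)) measureReal_nonneg

lemma leftEnd_upperTail (F : ℝ → ℝ) {p : ℝ} (hp : p < 1) :
    leftEnd (upperTail F p) = sInf ((↑) '' {t | p < F t}) := by
  simp [leftEnd, upperTail, div_pos_iff_of_pos_right (sub_pos.2 hp)]

lemma le_of_sInf_setOf_lt_le {F : ℝ → ℝ} (hF : Monotone F) {c x : ℝ}
    (hFx : ContinuousWithinAt F (Ici x) x)
    (h : sInf ((↑) '' {t | c < F t} : Set EReal) ≤ x) : c ≤ F x := by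
  refine ge_of_tendsto (hFx.mono_left (nhdsWithin_mono _ Ioi_subset_Ici_self)) ?_
  filter_upwards [self_mem_nhdsWithin] with z (hz : x < z)
  obtain ⟨_, ⟨t, ht, rfl⟩, htz⟩ := sInf_lt_iff.1 (h.trans_lt (EReal.coe_lt_coe_iff.2 hz))
  exact (ht : c < F t).le.trans (hF (EReal.coe_lt_coe_iff.1 htz).le)

lemma upperTail_sub_of_le {F : ℝ → ℝ} {p x y : ℝ} (hx : p ≤ F x) (hy : p ≤ F y) :
    upperTail F p y - upperTail F p x = (F y - F x) / (1 - p) := by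
  rw [upperTail, upperTail, max_eq_left (sub_nonneg.2 hx), max_eq_left (sub_nonneg.2 hy),
    div_sub_div_same, sub_sub_sub_cancel_right]

theorem condCDF_ssOrder_upperTail_general
    (μ : Measure Ω) [IsProbabilityMeasure μ]
    (p : ℝ) (hp : p ∈ Set.Ioo (0 : ℝ) 1)
    (A : Set Ω) (hAp : μ A = ENNReal.ofReal (1 - p))
    (X : Ω → ℝ) (F : ℝ → ℝ) (hX : HasCDF μ X F) :
    SSOrder (condCDF' μ X A) (upperTail F p) := by
  intro x y hx hxy
  obtain ⟨hXm, hXF⟩ := hX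
  obtain rfl : F = cdf (μ.map X) := by
    rw [← distFun_eq_cdf_map μ hXm]
    exact funext fun t => (hXF t).symm
  rw [leftEnd_upperTail _ hp.2] at hx
  have hpx := le_of_sInf_setOf_lt_le (cdf _).mono ((cdf _).right_continuous x) hx
  have hpy := hpx.trans ((cdf _).mono hxy)
  have hμA : μ.real A = 1 - p := by
    rw [measureReal_def, hAp, ENNReal.toReal_ofReal (sub_nonneg.2 hp.2.le)]
  rw [upperTail_sub_of_le hpx hpy, ← hXF x, ← hXF y, ← hμA]
  exact condCDF'_sub_le μ hXm A hxy

/-- The conditional distribution of `X` given any event of probability `1 − p`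
is smaller in strong stochastic order than the upper `p`-tail distribution. -/
theorem condCDF_ssOrder_upperTail
    (μ : Measure Ω) [IsProbabilityMeasure μ]
    (p : ℝ) (hp : p ∈ Set.Ioo (0 : ℝ) 1)
    (A : Set Ω) (hA : MeasurableSet A) (hAp : μ A = ENNReal.ofReal (1 - p))
    (X : Ω → ℝ) (F : ℝ → ℝ) (hX : HasCDF μ X F) :
    SSOrder (condCDF' μ X A) (upperTail F p) :=
  condCDF_ssOrder_upperTail_general μ p hp A hAp X F hX
end
end

section
/- Let F and G be strictly increasing continuous cumulative distribution functions on ℝ with F ≤_st G. Then the function p ↦ sup{VaR^R_p(X+Y) : (X,Y) ∈ F^o_2(F,G)} is continuous on (0,1). -/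
open MeasureTheory Set Filter

noncomputable section

variable {Ω : Type*} [MeasurableSpace Ω]

/-- The right quantile `H^{-1}(p+) = inf {t | H t > p}`, the right
Value-at-Risk `VaR^R_p(H)` at level `p`. -/
def quantR (H : ℝ → ℝ) (p : ℝ) : ℝ := sInf {t : ℝ | p < H t}

/-!
For an ordered coupling `(X, Y)` and `x ≤ t / 2`, the events `{X ≤ x}` and `{Y ≤ t - x}` lie a.s.
in `{X ≤ t - x}` and their intersection lies in `{X + Y ≤ t}`, so
`P(X + Y ≤ t) ≥ L(t) := max_{x ≤ t/2} (F x + G (t - x) - F (t - x))`: no VaR at level `p` exceeds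
`s` once `L(s) > p`. Conversely, if `L(t) < p` and `U` is uniform on `(0, 1)`, let `X = F⁻¹(U)`,
let `V` be `max X (t - X)` on `{U > p}` and `X` elsewhere, and `Y = G⁻¹(K(V))` with `K` the
continuous cdf of `V`. The condition `L(t) < p` gives `K ≥ G`, hence `Y ≥ V`, so `X ≤ Y` and
`X + Y ≥ t` on `{U > p}`. Thus the worst-case VaR `W` is monotone and `W(L(t)) = t`. As the
maximum defining `L(t)` is attained, `L` is strictly increasing with values in `(0, 1)`, so `W`
maps `(0, 1)` monotonically onto `ℝ` and is continuous. A uniform `U` is `G(Y₀)` for any `Y₀ ~ G`;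
without any ordered coupling the supremum is over the empty set.
-/

open Topology

structure IsStrictContCDF (F : ℝ → ℝ) : Prop extends IsCDF F where
  continuous : Continuous F
  strictMono : StrictMono F

def quantile (F : ℝ → ℝ) (u : ℝ) : ℝ := sInf {x | u ≤ F x}

namespace IsStrictContCDF

variable {F : ℝ → ℝ} (hF : IsStrictContCDF F)
include hF

theorem apply_mem_Ioo (x : ℝ) : F x ∈ Ioo 0 1 :=
  ⟨(hF.mono.le_of_tendsto hF.tendsto_atBot (x - 1)).trans_lt (hF.strictMono (by linarith)),
    (hF.strictMono (by linarith)).trans_le (hF.mono.ge_of_tendsto hF.tendsto_atTop (x + 1))⟩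

theorem exists_apply_eq {u : ℝ} (hu : u ∈ Ioo 0 1) : ∃ x, F x = u := by
  obtain ⟨a, ha⟩ := (hF.tendsto_atBot.eventually (gt_mem_nhds hu.1)).exists
  obtain ⟨b, hb⟩ := (hF.tendsto_atTop.eventually (lt_mem_nhds hu.2)).exists
  exact intermediate_value_univ a b hF.continuous ⟨ha.le, hb.le⟩

theorem apply_quantile {u : ℝ} (hu : u ∈ Ioo 0 1) : F (quantile F u) = u := by
  obtain ⟨x, rfl⟩ := hF.exists_apply_eq hu
  have : {y | F x ≤ F y} = Ici x := ext fun y => hF.strictMono.le_iff_le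
  rw [quantile, this, csInf_Ici]

theorem quantile_le_iff {u x : ℝ} (hu : u ∈ Ioo 0 1) : quantile F u ≤ x ↔ u ≤ F x := by
  conv_rhs => rw [← hF.apply_quantile hu]
  exact hF.strictMono.le_iff_le.symm

theorem le_quantile_iff {u x : ℝ} (hu : u ∈ Ioo 0 1) : x ≤ quantile F u ↔ F x ≤ u := by
  conv_rhs => rw [← hF.apply_quantile hu]
  exact hF.strictMono.le_iff_le.symm

theorem quantile_of_notMem {u : ℝ} (hu : u ∉ Ioo 0 1) : quantile F u = 0 := by
  rcases not_and_or.mp hu with hu | hu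
  · have : {x | u ≤ F x} = univ :=
      eq_univ_of_forall fun x => (not_lt.mp hu).trans (hF.apply_mem_Ioo x).1.le
    rw [quantile, this, Real.sInf_of_not_bddBelow not_bddBelow_univ]
  · have : {x | u ≤ F x} = ∅ :=
      eq_empty_of_forall_notMem fun x hx => hu (hx.trans_lt (hF.apply_mem_Ioo x).2)
    rw [quantile, this, Real.sInf_empty]

theorem measurable_quantile : Measurable (quantile F) := by
  refine measurable_of_Iic fun c => ?_
  have : quantile F ⁻¹' Iic c = {u | u ∈ Ioo 0 1 ∧ u ≤ F c} ∪ {u | u ∉ Ioo 0 1 ∧ 0 ≤ c} := by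
    ext u
    by_cases hu : u ∈ Ioo 0 1
    · simp [-mem_Ioo, hu, hF.quantile_le_iff hu]
    · simp [-mem_Ioo, hu, hF.quantile_of_notMem hu]
  rw [this]
  exact (measurableSet_Ioo.inter measurableSet_Iic).union
    (measurableSet_Ioo.compl.inter (MeasurableSet.const _))

end IsStrictContCDF

section Distribution

variable {μ : Measure Ω} [IsProbabilityMeasure μ]

theorem HasCDF.measure_cdf_comp_le {V : Ω → ℝ} {K : ℝ → ℝ} (hV : HasCDF μ V K) (hK : IsCDF K)
    (hKc : Continuous K) {c : ℝ} (hc : c ∈ Ioo 0 1) :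
    μ {ω | K (V ω) ≤ c} = ENNReal.ofReal c := by
  obtain ⟨a, ha⟩ := (hK.tendsto_atBot.eventually (gt_mem_nhds hc.1)).exists
  obtain ⟨b, hb⟩ := (hK.tendsto_atTop.eventually (lt_mem_nhds hc.2)).exists
  have hbdd : BddAbove {y | K y ≤ c} := ⟨b, fun y hy => (hK.mono.reflect_lt (hy.trans_lt hb)).le⟩
  set y := sSup {y | K y ≤ c}
  have hKy : K y ≤ c := (isClosed_le hKc continuous_const).csSup_mem ⟨a, ha.le⟩ hbdd
  have hKy' : K y = c := by
    obtain ⟨z, hz⟩ := intermediate_value_univ a b hKc ⟨ha.le, hb.le⟩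
    exact hKy.antisymm (hz ▸ hK.mono (le_csSup hbdd hz.le))
  have : {ω | K (V ω) ≤ c} = {ω | V ω ≤ y} :=
    ext fun ω => ⟨fun h => le_csSup hbdd h, fun h => (hK.mono h).trans hKy⟩
  rw [this, ← ENNReal.ofReal_toReal (measure_ne_top μ _), ← hKy', ← hV.2]
  rfl

omit [IsProbabilityMeasure μ] in
theorem hasCDF_quantile_comp {F : ℝ → ℝ} (hF : IsStrictContCDF F) {W : Ω → ℝ}
    (hW : Measurable W) (hW01 : ∀ ω, W ω ∈ Ioo 0 1)
    (hWcdf : ∀ c ∈ Ioo 0 1, μ {ω | W ω ≤ c} = ENNReal.ofReal c) :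
    HasCDF μ (fun ω => quantile F (W ω)) F := by
  refine ⟨hF.measurable_quantile.comp hW, fun x => ?_⟩
  have : {ω | quantile F (W ω) ≤ x} = {ω | W ω ≤ F x} :=
    ext fun ω => hF.quantile_le_iff (hW01 ω)
  rw [distFun, this, hWcdf _ (hF.apply_mem_Ioo x), ENNReal.toReal_ofReal (hF.apply_mem_Ioo x).1.le]

theorem map_eq_volume_restrict_Ioo {W : Ω → ℝ} (hW : Measurable W) (hW01 : ∀ ω, W ω ∈ Ioo 0 1)
    (hWcdf : ∀ c ∈ Ioo 0 1, μ {ω | W ω ≤ c} = ENNReal.ofReal c) :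
    μ.map W = volume.restrict (Ioo 0 1) := by
  have : IsFiniteMeasure (volume.restrict (Ioo (0 : ℝ) 1)) :=
    isFiniteMeasure_restrict.mpr measure_Ioo_lt_top.ne
  refine Measure.ext_of_Iic _ _ fun c => ?_
  rw [Measure.map_apply hW measurableSet_Iic, Measure.restrict_apply measurableSet_Iic]
  rcases le_or_gt c 0 with hc | hc
  · have h1 : W ⁻¹' Iic c = ∅ :=
      eq_empty_of_forall_notMem fun ω hω => (hW01 ω).1.not_ge (hω.trans hc)
    have h2 : Iic c ∩ Ioo 0 1 = ∅ :=
      eq_empty_of_forall_notMem fun u hu => hu.2.1.not_ge (hu.1.trans hc)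
    rw [h1, h2, measure_empty, measure_empty]
  rcases lt_or_ge c 1 with hc1 | hc1
  · have : Iic c ∩ Ioo 0 1 = Ioc 0 c := by
      ext u
      simp only [mem_inter_iff, mem_Iic, mem_Ioo, mem_Ioc]
      exact ⟨fun h => ⟨h.2.1, h.1⟩, fun h => ⟨h.2, h.1, h.2.trans_lt hc1⟩⟩
    rw [this, Real.volume_Ioc, sub_zero, ← hWcdf c ⟨hc, hc1⟩]
    rfl
  · have h1 : W ⁻¹' Iic c = univ := eq_univ_of_forall fun ω => (hW01 ω).2.le.trans hc1
    rw [h1, inter_eq_right.mpr fun u hu => hu.2.le.trans hc1, measure_univ, Real.volume_Ioo]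
    simp

end Distribution

def sumBound (F G : ℝ → ℝ) (t x : ℝ) : ℝ := F x + G (t - x) - F (t - x)

def maxSumBound (F G : ℝ → ℝ) (t : ℝ) : ℝ := sSup (sumBound F G t '' Iic (t / 2))

theorem sumBound_half (F G : ℝ → ℝ) (t : ℝ) : sumBound F G t (t / 2) = G (t / 2) := by
  simp [sumBound, sub_half]

theorem tendsto_sumBound_atBot {F G : ℝ → ℝ} (hF : IsCDF F) (hG : IsCDF G) (t : ℝ) :
    Tendsto (sumBound F G t) atBot (𝓝 0) := by
  have hsub : Tendsto (fun x : ℝ => t - x) atBot atTop :=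
    tendsto_atTop_add_const_left _ t tendsto_neg_atBot_atTop
  have h := (hF.tendsto_atBot.add (hG.tendsto_atTop.comp hsub)).sub (hF.tendsto_atTop.comp hsub)
  rwa [add_sub_cancel_right] at h

section SumBound

variable {F G : ℝ → ℝ} (hF : IsStrictContCDF F) (hG : IsStrictContCDF G)
include hF hG

theorem exists_isMaxOn_sumBound (t : ℝ) :
    ∃ x ∈ Iic (t / 2), IsMaxOn (sumBound F G t) (Iic (t / 2)) x := by
  have hcont : Continuous (sumBound F G t) := by
    have := hF.continuous
    have := hG.continuous
    unfold sumBound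
    fun_prop
  refine hcont.continuousOn.exists_isMaxOn' isClosed_Iic (mem_Iic.2 le_rfl) ?_
  rw [cocompact_eq_atBot_atTop, inf_sup_right, (disjoint_atTop_principal_Iic _).eq_bot,
    sup_bot_eq]
  refine Eventually.filter_mono inf_le_left ?_
  rw [sumBound_half]
  exact (tendsto_sumBound_atBot hF.toIsCDF hG.toIsCDF t).eventually
    (ge_mem_nhds (hG.apply_mem_Ioo _).1)

theorem sumBound_le_maxSumBound {t x : ℝ} (hx : x ≤ t / 2) :
    sumBound F G t x ≤ maxSumBound F G t := by
  obtain ⟨_, -, hmax⟩ := exists_isMaxOn_sumBound hF hG t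
  exact le_csSup ⟨_, forall_mem_image.2 fun y hy => hmax hy⟩ (mem_image_of_mem _ hx)

theorem exists_sumBound_eq_maxSumBound (t : ℝ) :
    ∃ x ≤ t / 2, sumBound F G t x = maxSumBound F G t := by
  obtain ⟨x, hx, hmax⟩ := exists_isMaxOn_sumBound hF hG t
  have : IsGreatest (sumBound F G t '' Iic (t / 2)) (sumBound F G t x) :=
    ⟨mem_image_of_mem _ hx, forall_mem_image.2 hmax⟩
  exact ⟨x, hx, this.csSup_eq.symm⟩

theorem strictMono_maxSumBound : StrictMono (maxSumBound F G) := by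
  intro t t' htt'
  obtain ⟨x, hx, hxL⟩ := exists_sumBound_eq_maxSumBound hF hG t
  rw [← hxL]
  by_cases hshift : x + (t' - t) ≤ t' / 2
  · -- moving `x` by `t' - t` keeps `t - x` fixed and strictly increases `F x`
    refine lt_of_lt_of_le ?_ (sumBound_le_maxSumBound hF hG hshift)
    have : t' - (x + (t' - t)) = t - x := by ring
    simp only [sumBound, this]
    linarith [hF.strictMono (show x < x + (t' - t) by linarith)]
  · -- otherwise `t - x < t' / 2`, and already the bound at `t' / 2` exceeds `G (t - x)`
    refine lt_of_lt_of_le ?_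
      ((sumBound_half F G t').symm.trans_le (sumBound_le_maxSumBound hF hG le_rfl))
    have hFx : F x ≤ F (t - x) := hF.mono (by linarith)
    have hGx : G (t - x) < G (t' / 2) := hG.strictMono (by linarith)
    simp only [sumBound]
    linarith

theorem maxSumBound_mem_Ioo (hst : StOrder F G) (t : ℝ) : maxSumBound F G t ∈ Ioo 0 1 := by
  obtain ⟨x, -, hxL⟩ := exists_sumBound_eq_maxSumBound hF hG t
  refine ⟨(hG.apply_mem_Ioo _).1.trans_le
    ((sumBound_half F G t).symm.trans_le (sumBound_le_maxSumBound hF hG le_rfl)), ?_⟩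
  rw [← hxL, sumBound]
  linarith [hst (t - x), (hF.apply_mem_Ioo x).2]

theorem exists_lt_maxSumBound {p : ℝ} (hp : p < 1) : ∃ t, p < maxSumBound F G t := by
  obtain ⟨x, hx⟩ := (hG.tendsto_atTop.eventually (lt_mem_nhds hp)).exists
  refine ⟨2 * x, hx.trans_le ?_⟩
  simpa [sumBound, two_mul] using sumBound_le_maxSumBound hF hG (t := 2 * x) (x := x) (by linarith)

end SumBound

theorem measureReal_mono_ae {μ : Measure Ω} [IsFiniteMeasure μ] {s t : Set Ω} (h : s ≤ᵐ[μ] t) :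
    μ.real s ≤ μ.real t :=
  ENNReal.toReal_mono (measure_ne_top μ t) (measure_mono_ae h)

namespace OrderedCoupling

variable {μ : Measure Ω} [IsProbabilityMeasure μ] {F G : ℝ → ℝ} {X Y : Ω → ℝ}

theorem sumBound_le_distFun_add (hcpl : OrderedCoupling μ F G X Y) {t x : ℝ} (hx : x ≤ t / 2) :
    sumBound F G t x ≤ distFun μ (fun ω => X ω + Y ω) t := by
  obtain ⟨hX, hY, hord⟩ := hcpl
  set A := {ω | X ω ≤ x}
  set B := {ω | Y ω ≤ t - x}
  have hunion : μ.real (A ∪ B) ≤ μ.real {ω | X ω ≤ t - x} :=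
    measureReal_mono_ae <| hord.mono fun ω hω h =>
      h.elim (fun h => h.trans (by linarith)) (fun h => hω.trans h)
  have hinter : μ.real (A ∩ B) ≤ μ.real {ω | X ω + Y ω ≤ t} :=
    measureReal_mono fun ω h => show X ω + Y ω ≤ t by linarith [h.1.out, h.2.out]
  have hsum : μ.real (A ∪ B) + μ.real (A ∩ B) = μ.real A + μ.real B :=
    measureReal_union_add_inter (hY.1 measurableSet_Iic)
  have hA : μ.real A = F x := hX.2 x
  have hB : μ.real B = G (t - x) := hY.2 (t - x)
  have hC : μ.real {ω | X ω ≤ t - x} = F (t - x) := hX.2 (t - x)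
  change _ ≤ μ.real _
  unfold sumBound
  linarith

theorem distFun_add_le (hcpl : OrderedCoupling μ F G X Y) (t : ℝ) :
    distFun μ (fun ω => X ω + Y ω) t ≤ F (t / 2) := by
  rw [← hcpl.1.2]
  exact measureReal_mono_ae <| hcpl.2.2.mono fun ω hω (h : X ω + Y ω ≤ t) =>
    show X ω ≤ t / 2 by linarith

theorem bddBelow_setOf_lt_distFun_add (hF : IsCDF F) (hcpl : OrderedCoupling μ F G X Y) {p : ℝ}
    (hp : 0 < p) :
    BddBelow {t | p < distFun μ (fun ω => X ω + Y ω) t} := by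
  obtain ⟨x, hx⟩ := (hF.tendsto_atBot.eventually (gt_mem_nhds hp)).exists
  refine ⟨2 * x, fun t ht => ?_⟩
  have := hF.mono.reflect_lt (hx.trans (ht.out.trans_le (hcpl.distFun_add_le t)))
  linarith

variable (hF : IsStrictContCDF F) (hG : IsStrictContCDF G)
include hF hG

theorem maxSumBound_le_distFun_add (hcpl : OrderedCoupling μ F G X Y) (t : ℝ) :
    maxSumBound F G t ≤ distFun μ (fun ω => X ω + Y ω) t := by
  obtain ⟨x, hx, hxL⟩ := exists_sumBound_eq_maxSumBound hF hG t
  exact hxL ▸ hcpl.sumBound_le_distFun_add hx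

theorem quantR_le (hcpl : OrderedCoupling μ F G X Y) {p s : ℝ} (hp : 0 < p)
    (hs : p < maxSumBound F G s) : quantR (distFun μ (fun ω => X ω + Y ω)) p ≤ s :=
  csInf_le (hcpl.bddBelow_setOf_lt_distFun_add hF.toIsCDF hp)
    (hs.trans_le (hcpl.maxSumBound_le_distFun_add hF hG s))

theorem nonempty_setOf_lt_distFun_add (hcpl : OrderedCoupling μ F G X Y) {p : ℝ} (hp : p < 1) :
    {t | p < distFun μ (fun ω => X ω + Y ω) t}.Nonempty := by
  obtain ⟨s, hs⟩ := exists_lt_maxSumBound hF hG hp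
  exact ⟨s, hs.trans_le (hcpl.maxSumBound_le_distFun_add hF hG s)⟩

theorem le_quantR (hcpl : OrderedCoupling μ F G X Y) {p t : ℝ} (hp : p < 1)
    (h : ∀ s < t, distFun μ (fun ω => X ω + Y ω) s ≤ p) :
    t ≤ quantR (distFun μ (fun ω => X ω + Y ω)) p :=
  le_csInf (hcpl.nonempty_setOf_lt_distFun_add hF hG hp)
    fun s hs => not_lt.1 fun hst => (h s hst).not_gt hs

end OrderedCoupling

theorem volume_Ioc_inter_Ici (a b c : ℝ) :
    volume (Ioc a b ∩ Ici c) = ENNReal.ofReal (b - max a c) := by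
  rcases le_or_gt c a with h | h
  · have : Ioc a b ∩ Ici c = Ioc a b := inter_eq_left.mpr fun u hu => h.trans hu.1.le
    rw [this, Real.volume_Ioc, max_eq_left h]
  · have : Ioc a b ∩ Ici c = Icc c b := by
      ext u
      simp only [mem_inter_iff, mem_Ioc, mem_Ici, mem_Icc]
      constructor
      · rintro ⟨⟨-, hub⟩, hcu⟩
        exact ⟨hcu, hub⟩
      · rintro ⟨hcu, hub⟩
        exact ⟨⟨h.trans_le hcu, hub⟩, hcu⟩
    rw [this, Real.volume_Icc, max_eq_right h.le]

def couplingFloor (F : ℝ → ℝ) (t p u : ℝ) : ℝ :=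
  if p < u then max (quantile F u) (t - quantile F u) else quantile F u

def couplingFloorCDF (F : ℝ → ℝ) (t p y : ℝ) : ℝ :=
  min (F y) p + max (F y - max p (F (t - y))) 0

section CouplingFloor

variable {F G : ℝ → ℝ} {t p : ℝ}

theorem quantile_le_couplingFloor (u : ℝ) : quantile F u ≤ couplingFloor F t p u := by
  unfold couplingFloor
  split_ifs
  exacts [le_max_left _ _, le_rfl]

theorem le_quantile_add_couplingFloor {u : ℝ} (hpu : p < u) :
    t ≤ quantile F u + couplingFloor F t p u := by
  rw [couplingFloor, if_pos hpu]
  linarith [le_max_right (quantile F u) (t - quantile F u)]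

theorem couplingFloorCDF_le (y : ℝ) : couplingFloorCDF F t p y ≤ F y := by
  unfold couplingFloorCDF
  have hp : F y - max p (F (t - y)) ≤ F y - p := by linarith [le_max_left p (F (t - y))]
  rcases le_total (F y) p with h | h
  · rw [min_eq_left h, max_eq_right (by linarith)]
    linarith
  · rw [min_eq_right h]
    linarith [max_le hp (show (0 : ℝ) ≤ F y - p by linarith)]

theorem le_couplingFloorCDF (hG : Monotone G) (hst : StOrder F G)
    (hL : ∀ x ≤ t / 2, sumBound F G t x < p) (y : ℝ) : G y ≤ couplingFloorCDF F t p y := by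
  unfold couplingFloorCDF
  have hmax := le_max_left (F y - max p (F (t - y))) 0
  have hmax0 := le_max_right (F y - max p (F (t - y))) 0
  rcases lt_or_ge y (t / 2) with hy | hy
  · have hGp : G y < p := (hG hy.le).trans_lt (sumBound_half F G t ▸ hL _ le_rfl)
    linarith [le_min (hst y) hGp.le]
  · have hx := hL (t - y) (by linarith)
    simp only [sumBound, sub_sub_cancel] at hx
    rcases le_total (F y) p with h | h
    · rw [min_eq_left h]
      linarith [hst y]
    · rw [min_eq_right h]
      rcases le_total p (F (t - y)) with h' | h'
      · rw [max_eq_right h'] at hmax ⊢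
        linarith
      · rw [max_eq_left h'] at hmax ⊢
        linarith [hst y]

variable (hF : IsStrictContCDF F)
include hF

theorem measurable_couplingFloor : Measurable (couplingFloor F t p) :=
  Measurable.ite measurableSet_Ioi
    (hF.measurable_quantile.max (measurable_const.sub hF.measurable_quantile))
    hF.measurable_quantile

theorem couplingFloor_le_iff {u y : ℝ} (hu : u ∈ Ioo 0 1) :
    couplingFloor F t p u ≤ y ↔ u ≤ F y ∧ (p < u → F (t - y) ≤ u) := by
  have hsub : t - quantile F u ≤ y ↔ F (t - y) ≤ u := by
    rw [sub_le_comm, hF.le_quantile_iff hu]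
  unfold couplingFloor
  split_ifs with hpu
  · simp [hF.quantile_le_iff hu, hsub, hpu]
  · simp [hF.quantile_le_iff hu, hpu]

theorem continuous_couplingFloorCDF : Continuous (couplingFloorCDF F t p) := by
  have := hF.continuous
  unfold couplingFloorCDF
  fun_prop

theorem hasCDF_couplingFloor {μ : Measure Ω} (hp : p ∈ Ioo 0 1) {U : Ω → ℝ} (hU : Measurable U)
    (hU01 : ∀ ω, U ω ∈ Ioo 0 1) (hUmap : μ.map U = volume.restrict (Ioo 0 1)) :
    HasCDF μ (fun ω => couplingFloor F t p (U ω)) (couplingFloorCDF F t p) := by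
  refine ⟨(measurable_couplingFloor hF).comp hU, fun y => ?_⟩
  set S := Ioc 0 (min (F y) p) ∪ (Ioc p (F y) ∩ Ici (F (t - y)))
  have hS : MeasurableSet S := measurableSet_Ioc.union (measurableSet_Ioc.inter measurableSet_Ici)
  have hpre : {ω | couplingFloor F t p (U ω) ≤ y} = U ⁻¹' S := by
    ext ω
    have hu := hU01 ω
    simp only [S, mem_ofPred_eq, mem_preimage, mem_union, mem_inter_iff, mem_Ioc, mem_Ici,
      le_min_iff, couplingFloor_le_iff hF hu]
    by_cases hpu : p < U ω
    · simp [hpu, hpu.not_ge]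
    · simp [hpu, hu.1, not_lt.1 hpu]
  have hSIoo : S ∩ Ioo 0 1 = S := by
    refine inter_eq_left.mpr fun u hu => ?_
    have hy := (hF.apply_mem_Ioo y).2
    rcases hu with hu | hu
    exacts [⟨hu.1, (hu.2.trans (min_le_left _ _)).trans_lt hy⟩,
      ⟨hp.1.trans hu.1.1, hu.1.2.trans_lt hy⟩]
  have hdisj : Disjoint (Ioc 0 (min (F y) p)) (Ioc p (F y) ∩ Ici (F (t - y))) :=
    disjoint_left.2 fun u h1 h2 => (h1.2.trans (min_le_right _ _)).not_gt h2.1.1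
  rw [distFun, hpre, ← Measure.map_apply hU hS, hUmap, Measure.restrict_apply hS, hSIoo,
    measure_union hdisj (measurableSet_Ioc.inter measurableSet_Ici), Real.volume_Ioc,
    volume_Ioc_inter_Ici, ENNReal.toReal_add ENNReal.ofReal_ne_top ENNReal.ofReal_ne_top,
    ENNReal.toReal_ofReal' , ENNReal.toReal_ofReal', sub_zero, couplingFloorCDF,
    max_eq_left (le_min (hF.apply_mem_Ioo y).1.le hp.1.le)]

theorem isCDF_couplingFloorCDF (hG : IsStrictContCDF G) (hst : StOrder F G)
    (hL : ∀ x ≤ t / 2, sumBound F G t x < p) : IsCDF (couplingFloorCDF F t p) where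
  mono a b hab := by
    unfold couplingFloorCDF
    gcongr <;> exact hF.mono (by linarith)
  right_cont _ := (continuous_couplingFloorCDF hF).continuousWithinAt
  tendsto_atBot := tendsto_of_tendsto_of_tendsto_of_le_of_le hG.tendsto_atBot hF.tendsto_atBot
    (le_couplingFloorCDF hG.mono hst hL) couplingFloorCDF_le
  tendsto_atTop := tendsto_of_tendsto_of_tendsto_of_le_of_le hG.tendsto_atTop hF.tendsto_atTop
    (le_couplingFloorCDF hG.mono hst hL) couplingFloorCDF_le

end CouplingFloor

theorem exists_orderedCoupling_le_quantR {μ : Measure Ω} [IsProbabilityMeasure μ] {F G : ℝ → ℝ}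
    (hF : IsStrictContCDF F) (hG : IsStrictContCDF G) (hst : StOrder F G) {U : Ω → ℝ}
    (hU : Measurable U) (hU01 : ∀ ω, U ω ∈ Ioo 0 1)
    (hUcdf : ∀ c ∈ Ioo 0 1, μ {ω | U ω ≤ c} = ENNReal.ofReal c) {t p : ℝ} (hp : p ∈ Ioo 0 1)
    (hL : maxSumBound F G t < p) :
    ∃ X Y : Ω → ℝ, OrderedCoupling μ F G X Y ∧
      t ≤ quantR (distFun μ (fun ω => X ω + Y ω)) p := by
  have hL' : ∀ x ≤ t / 2, sumBound F G t x < p := fun x hx =>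
    (sumBound_le_maxSumBound hF hG hx).trans_lt hL
  set V := fun ω => couplingFloor F t p (U ω)
  set K := couplingFloorCDF F t p
  have hV : HasCDF μ V K :=
    hasCDF_couplingFloor hF hp hU hU01 (map_eq_volume_restrict_Ioo hU hU01 hUcdf)
  have hKc : Continuous K := continuous_couplingFloorCDF hF
  have hGK : ∀ y, G y ≤ K y := le_couplingFloorCDF hG.mono hst hL'
  have hK01 : ∀ y, K y ∈ Ioo 0 1 := fun y =>
    ⟨(hG.apply_mem_Ioo y).1.trans_le (hGK y),
      (couplingFloorCDF_le y).trans_lt (hF.apply_mem_Ioo y).2⟩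
  set X := fun ω => quantile F (U ω)
  set Y := fun ω => quantile G (K (V ω))
  have hVY : ∀ ω, V ω ≤ Y ω := fun ω => (hG.le_quantile_iff (hK01 _)).2 (hGK _)
  have hcpl : OrderedCoupling μ F G X Y :=
    ⟨hasCDF_quantile_comp hF hU hU01 hUcdf,
      hasCDF_quantile_comp hG (hKc.measurable.comp hV.1) (fun ω => hK01 _)
        fun c hc => hV.measure_cdf_comp_le (isCDF_couplingFloorCDF hF hG hst hL') hKc hc,
      ae_of_all _ fun ω => (quantile_le_couplingFloor _).trans (hVY ω)⟩
  refine ⟨X, Y, hcpl, hcpl.le_quantR hF hG hp.2 fun s hs => ?_⟩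
  have hsub : {ω | X ω + Y ω ≤ s} ⊆ {ω | U ω ≤ p} := fun ω hω => not_lt.1 fun hpu => by
    have : t ≤ X ω + V ω := le_quantile_add_couplingFloor hpu
    linarith [hVY ω, hω.out]
  calc distFun μ (fun ω => X ω + Y ω) s ≤ μ.real {ω | U ω ≤ p} := measureReal_mono hsub
    _ = p := by rw [measureReal_def, hUcdf p hp, ENNReal.toReal_ofReal hp.1.le]

theorem MonotoneOn.continuousOn_of_surjOn {α β : Type*} [LinearOrder α] [TopologicalSpace α]
    [OrderTopology α] [LinearOrder β] [TopologicalSpace β] [OrderTopology β] [DenselyOrdered β]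
    {f : α → β} {s : Set α} (hf : MonotoneOn f s)
    (hs : IsOpen s) (hsurj : SurjOn f s univ) : ContinuousOn f s := fun _ hx =>
  (continuousAt_of_monotoneOn_of_image_mem_nhds hf (hs.mem_nhds hx)
    (mem_of_superset univ_mem hsurj)).continuousWithinAt

def worstVaR (μ : Measure Ω) (F G : ℝ → ℝ) (p : ℝ) : ℝ :=
  sSup {r : ℝ | ∃ X Y : Ω → ℝ, OrderedCoupling μ F G X Y ∧
    r = quantR (distFun μ (fun ω => X ω + Y ω)) p}

section WorstVaR

variable {μ : Measure Ω} [IsProbabilityMeasure μ] {F G : ℝ → ℝ}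
  (hF : IsStrictContCDF F) (hG : IsStrictContCDF G)
include hF hG

theorem OrderedCoupling.quantR_le_worstVaR {X Y : Ω → ℝ} (hcpl : OrderedCoupling μ F G X Y)
    {p : ℝ} (hp : p ∈ Ioo 0 1) :
    quantR (distFun μ (fun ω => X ω + Y ω)) p ≤ worstVaR μ F G p := by
  obtain ⟨s, hs⟩ := exists_lt_maxSumBound hF hG hp.2
  refine le_csSup ⟨s, ?_⟩ ⟨X, Y, hcpl, rfl⟩
  rintro _ ⟨X', Y', hcpl', rfl⟩
  exact hcpl'.quantR_le hF hG hp.1 hs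

theorem monotoneOn_worstVaR (hex : ∃ X Y : Ω → ℝ, OrderedCoupling μ F G X Y) :
    MonotoneOn (worstVaR μ F G) (Ioo 0 1) := by
  intro p hp q hq hpq
  obtain ⟨X₀, Y₀, hcpl₀⟩ := hex
  refine csSup_le ⟨_, X₀, Y₀, hcpl₀, rfl⟩ ?_
  rintro _ ⟨X, Y, hcpl, rfl⟩
  refine le_trans ?_ (hcpl.quantR_le_worstVaR hF hG hq)
  exact csInf_le_csInf (hcpl.bddBelow_setOf_lt_distFun_add hF.toIsCDF hp.1)
    (hcpl.nonempty_setOf_lt_distFun_add hF hG hq.2) fun t ht => hpq.trans_lt ht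

theorem worstVaR_maxSumBound (hst : StOrder F G) {U : Ω → ℝ} (hU : Measurable U)
    (hU01 : ∀ ω, U ω ∈ Ioo 0 1) (hUcdf : ∀ c ∈ Ioo 0 1, μ {ω | U ω ≤ c} = ENNReal.ofReal c)
    (t : ℝ) : worstVaR μ F G (maxSumBound F G t) = t := by
  have hp := maxSumBound_mem_Ioo hF hG hst t
  have hlow : ∀ t' < t, ∃ X Y : Ω → ℝ, OrderedCoupling μ F G X Y ∧
      t' ≤ quantR (distFun μ (fun ω => X ω + Y ω)) (maxSumBound F G t) := fun t' ht' =>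
    exists_orderedCoupling_le_quantR hF hG hst hU hU01 hUcdf hp (strictMono_maxSumBound hF hG ht')
  obtain ⟨X₀, Y₀, hcpl₀, -⟩ := hlow (t - 1) (by linarith)
  refine le_antisymm (csSup_le ⟨_, X₀, Y₀, hcpl₀, rfl⟩ ?_) (le_of_forall_lt_imp_le_of_dense ?_)
  · rintro _ ⟨X, Y, hcpl, rfl⟩
    exact le_of_forall_gt_imp_ge_of_dense fun s hs =>
      hcpl.quantR_le hF hG hp.1 (strictMono_maxSumBound hF hG hs)
  · intro t' ht'
    obtain ⟨X, Y, hcpl, ht'X⟩ := hlow t' ht'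
    exact ht'X.trans (hcpl.quantR_le_worstVaR hF hG hp)

end WorstVaR

theorem worst_VaRR_continuous_general
    (μ : Measure Ω) [IsProbabilityMeasure μ]
    (F G : ℝ → ℝ) (hF : IsCDF F) (hG : IsCDF G)
    (hFc : Continuous F) (hGc : Continuous G)
    (hFs : StrictMono F) (hGs : StrictMono G) (hst : StOrder F G) :
    ContinuousOn (fun p : ℝ =>
        sSup {r : ℝ | ∃ X Y : Ω → ℝ, OrderedCoupling μ F G X Y ∧
          r = quantR (distFun μ (fun ω => X ω + Y ω)) p})
      (Set.Ioo 0 1) := by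
  change ContinuousOn (worstVaR μ F G) (Ioo 0 1)
  have hF' : IsStrictContCDF F := ⟨hF, hFc, hFs⟩
  have hG' : IsStrictContCDF G := ⟨hG, hGc, hGs⟩
  by_cases hex : ∃ X Y : Ω → ℝ, OrderedCoupling μ F G X Y
  · obtain ⟨X₀, Y₀, hcpl₀⟩ := hex
    have hW := worstVaR_maxSumBound (μ := μ) hF' hG' hst (hGc.measurable.comp hcpl₀.2.1.1)
      (fun ω => hG'.apply_mem_Ioo (Y₀ ω)) fun c hc => hcpl₀.2.1.measure_cdf_comp_le hG hGc hc
    exact (monotoneOn_worstVaR hF' hG' ⟨X₀, Y₀, hcpl₀⟩).continuousOn_of_surjOn isOpen_Ioo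
      fun t _ => ⟨maxSumBound F G t, maxSumBound_mem_Ioo hF' hG' hst t, hW t⟩
  · refine continuousOn_const (c := (0 : ℝ)).congr fun p _ => ?_
    simp only [not_exists] at hex
    simp [worstVaR, hex]

/-- For strictly increasing continuous marginal cdfs, the worst-case right
Value-at-Risk over the order-constrained set is continuous in `p` on `(0,1)`. -/
theorem worst_VaRR_continuous
    (μ : Measure Ω) [IsProbabilityMeasure μ] (hμ : Atomless μ)
    (F G : ℝ → ℝ) (hF : IsCDF F) (hG : IsCDF G)
    (hFc : Continuous F) (hGc : Continuous G)
    (hFs : StrictMono F) (hGs : StrictMono G) (hst : StOrder F G) :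
    ContinuousOn (fun p : ℝ =>
        sSup {r : ℝ | ∃ X Y : Ω → ℝ, OrderedCoupling μ F G X Y ∧
          r = quantR (distFun μ (fun ω => X ω + Y ω)) p})
      (Set.Ioo 0 1) :=
  worst_VaRR_continuous_general μ F G hF hG hFc hGc hFs hGs hst
end
end
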